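/- Let A = {x : aᵢ·x ≤ bᵢ, i ∈ I} be a polytope, γ > 0, g_A(x, γ) = ReLU(Σ_{i∈I} g(bᵢ - aᵢ·x, γ) - |I| + 1) with g(t, γ) = ReLU(1+γt) - ReLU(γt), K ≥ 0, p affine, and h(x, γ) = ReLU(p(x) + K·g_A(x, γ) - K) - ReLU(-p(x) + K·g_A(x, γ) - K). If f : ℝⁿ → ℝ satisfies f(x) + p(x) ∈ Φ for all x ∈ A, where Φ ⊆ ℝ is any set, then the repaired function f̂(x) = f(x) + h(x, γ) satisfies f̂(x) ∈ Φ for all x ∈ A. -/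

import Mathlib

/-! On `A` every slack `bᵢ - aᵢ·x` is nonnegative, so each gate `g` saturates at `1`, the sum
equals `|I|` and `g_A = 1`. The `K`-terms then cancel and `h = ReLU(p) - ReLU(-p) = p`, so
`f̂ = f + p` on `A`. -/

lemma max_one_add_sub_max_eq_one {s : ℝ} (hs : 0 ≤ s) : max (1 + s) 0 - max s 0 = 1 := by
  rw [max_eq_left (by linarith), max_eq_left hs]
  ring

lemma max_sum_sub_card_add_one_eq_one {ι : Type*} (I : Finset ι) (u : ι → ℝ)
    (hu : ∀ i ∈ I, u i = 1) : max (∑ i ∈ I, u i - I.card + 1) 0 = 1 := by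
  rw [Finset.sum_congr rfl hu, Finset.sum_const, nsmul_one, sub_self, zero_add]
  exact max_eq_left zero_le_one

theorem single_region_soundness_general {n : ℕ} {ι : Type*} (I : Finset ι)
    (a : ι → Fin n → ℝ) (b : ι → ℝ) (γ : ℝ) (hγ : 0 < γ)
    (g : ℝ → ℝ) (hg : ∀ t, g t = max (1 + γ * t) 0 - max (γ * t) 0)
    (A : Set (Fin n → ℝ)) (hA : A = {x | ∀ i ∈ I, ∑ j, a i j * x j ≤ b i})
    (gA : (Fin n → ℝ) → ℝ)
    (hgA : ∀ x, gA x = max (∑ i ∈ I, g (b i - ∑ j, a i j * x j) - I.card + 1) 0)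
    (K : ℝ) (p : (Fin n → ℝ) →ᵃ[ℝ] ℝ)
    (h : (Fin n → ℝ) → ℝ)
    (hh : ∀ x, h x = max (p x + K * gA x - K) 0 - max (-p x + K * gA x - K) 0)
    (Φ : Set ℝ) (f : (Fin n → ℝ) → ℝ) (hf : ∀ x ∈ A, f x + p x ∈ Φ)
    (fhat : (Fin n → ℝ) → ℝ) (hfhat : ∀ x, fhat x = f x + h x) :
    ∀ x ∈ A, fhat x ∈ Φ := by
  intro x hx
  have hslack : ∀ i ∈ I, ∑ j, a i j * x j ≤ b i := by rwa [hA] at hx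
  have hgate : ∀ i ∈ I, g (b i - ∑ j, a i j * x j) = 1 := fun i hi => by
    rw [hg]
    exact max_one_add_sub_max_eq_one (mul_nonneg hγ.le (sub_nonneg.2 (hslack i hi)))
  have hgA_one : gA x = 1 := by
    rw [hgA]
    exact max_sum_sub_card_add_one_eq_one I _ hgate
  have hh_eq : h x = p x := by
    rw [hh, hgA_one, mul_one, add_sub_cancel_right, add_sub_cancel_right]
    exact posPart_sub_negPart (p x)
  rw [hfhat, hh_eq]
  exact hf x hx

/-- Single-region soundness: the repaired function f + h satisfies the spec on A. -/
theorem single_region_soundness {n : ℕ} {ι : Type*} (I : Finset ι)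
    (a : ι → Fin n → ℝ) (b : ι → ℝ) (γ : ℝ) (hγ : 0 < γ)
    (g : ℝ → ℝ) (hg : ∀ t, g t = max (1 + γ * t) 0 - max (γ * t) 0)
    (A : Set (Fin n → ℝ)) (hA : A = {x | ∀ i ∈ I, ∑ j, a i j * x j ≤ b i})
    (gA : (Fin n → ℝ) → ℝ)
    (hgA : ∀ x, gA x = max (∑ i ∈ I, g (b i - ∑ j, a i j * x j) - I.card + 1) 0)
    (K : ℝ) (hK : 0 ≤ K) (p : (Fin n → ℝ) →ᵃ[ℝ] ℝ)
    (h : (Fin n → ℝ) → ℝ)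
    (hh : ∀ x, h x = max (p x + K * gA x - K) 0 - max (-p x + K * gA x - K) 0)
    (Φ : Set ℝ) (f : (Fin n → ℝ) → ℝ) (hf : ∀ x ∈ A, f x + p x ∈ Φ)
    (fhat : (Fin n → ℝ) → ℝ) (hfhat : ∀ x, fhat x = f x + h x) :
    ∀ x ∈ A, fhat x ∈ Φ :=
  single_region_soundness_general I a b γ hγ g hg A hA gA hgA K p h hh Φ f hf fhat hfhat
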